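/- If f ∈ L¹(ℝ²,ℍ), then ℱ_s f = ℱ_r(βf) everywhere on ℝ². Moreover, if f is ℂ_i-valued (i.e. its j- and k-components vanish) or f is even with respect to its first variable (f(−x₁,x₂) = f(x₁,x₂)), then ℱ_s f = ℱ_r f. -/

import Mathlib

open MeasureTheory Real ENNReal

noncomputable section

/-- The real quaternions. -/
abbrev Hq := Quaternion ℝ

/-- The imaginary unit `i`. -/
def qi : Hq := ⟨0,1,0,0⟩
/-- The imaginary unit `j`. -/
def qj : Hq := ⟨0,0,1,0⟩
/-- The imaginary unit `k`. -/
def qk : Hq := ⟨0,0,0,1⟩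

/-- For a (unit pure imaginary) quaternion `u`, `e^{uθ} := cos θ + u sin θ`. -/
def qexp (u : Hq) (θ : ℝ) : Hq := (Real.cos θ) • (1 : Hq) + (Real.sin θ) • u

/-- The right-sided quaternion Fourier transform of `f ∈ L¹(ℝ²,ℍ)`. -/
def Fr (f : ℝ × ℝ → Hq) (ω : ℝ × ℝ) : Hq :=
  (1 / (2 * Real.pi)) • ∫ x : ℝ × ℝ, f x * qexp qi (-(ω.1 * x.1)) * qexp qj (-(ω.2 * x.2))

/-- The two-sided quaternion Fourier transform of `f ∈ L¹(ℝ²,ℍ)`. -/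
def Fs (f : ℝ × ℝ → Hq) (ω : ℝ × ℝ) : Hq :=
  (1 / (2 * Real.pi)) • ∫ x : ℝ × ℝ, qexp qi (-(ω.1 * x.1)) * f x * qexp qj (-(ω.2 * x.2))


/-- The transform beta. -/
def betaT (f : ℝ × ℝ → Hq) (x : ℝ × ℝ) : Hq :=
  ⟨(f x).re, (f x).imI, (f (-x.1, x.2)).imJ, (f (-x.1, x.2)).imK⟩

/-!
Moving `e^{-iθ}` from the left of a quaternion `q` to its right leaves the `ℂ_i`-part of `q`
unchanged and flips the sign of `θ` on the `j,k`-part, since `i` anticommutes with `j` and `k`.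
In the two-sided transform the `j,k`-part of `f` therefore meets the kernel at `(-x₁, x₂)`; the
substitution `x₁ ↦ -x₁` moves the reflection onto `f`, which is exactly what `β` does to the
`j`- and `k`-components. Under either extra hypothesis `βf = f`.
-/

/-- Since `i q i = -q` on `ℂ_i` and `i q i = q` on `ℝj + ℝk`, `projCi` and `projJK` are the
projections of `ℍ` onto these two summands. -/
def projCi (q : Hq) : Hq := (2 : ℝ)⁻¹ • (q - qi * q * qi)

def projJK (q : Hq) : Hq := (2 : ℝ)⁻¹ • (q + qi * q * qi)

lemma qexp_qi_mul (q : Hq) (θ : ℝ) :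
    qexp qi θ * q = projCi q * qexp qi θ + projJK q * qexp qi (-θ) := by
  ext <;> simp [projCi, projJK, qexp] <;>
    simp [qi, Quaternion.re_one, Quaternion.imI_one, Quaternion.imJ_one, Quaternion.imK_one] <;> ring

lemma continuous_qexp (u : Hq) : Continuous (qexp u) := by
  unfold qexp; fun_prop

lemma norm_qexp_le (u : Hq) (θ : ℝ) : ‖qexp u θ‖ ≤ 1 + ‖u‖ :=
  calc ‖qexp u θ‖ ≤ ‖Real.cos θ • (1 : Hq)‖ + ‖Real.sin θ • u‖ := norm_add_le _ _
    _ = |Real.cos θ| + |Real.sin θ| * ‖u‖ := by simp [norm_smul]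
    _ ≤ 1 + 1 * ‖u‖ := by gcongr <;> simp only [Real.abs_cos_le_one, Real.abs_sin_le_one]
    _ = 1 + ‖u‖ := by rw [one_mul]

def reflectFst : ℝ × ℝ ≃ᵐ ℝ × ℝ := (MeasurableEquiv.neg ℝ).prodCongr (MeasurableEquiv.refl ℝ)

@[simp]
lemma reflectFst_apply (x : ℝ × ℝ) : reflectFst x = (-x.1, x.2) := rfl

lemma measurePreserving_reflectFst : MeasurePreserving reflectFst volume volume :=
  (Measure.measurePreserving_neg (volume : Measure ℝ)).prod (MeasurePreserving.id volume)

lemma betaT_apply (f : ℝ × ℝ → Hq) (x : ℝ × ℝ) :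
    betaT f x = projCi (f x) + projJK (f (reflectFst x)) := by
  ext <;> simp [betaT, projCi, projJK] <;> simp [qi] <;> ring

lemma betaT_eq_self_of_imJ_imK_eq_zero {f : ℝ × ℝ → Hq}
    (h : ∀ x, (f x).imJ = 0 ∧ (f x).imK = 0) : betaT f = f := by
  funext x
  ext <;> simp [betaT, (h x).1, (h x).2, (h (-x.1, x.2)).1, (h (-x.1, x.2)).2]

lemma betaT_eq_self_of_even {f : ℝ × ℝ → Hq} (h : ∀ x : ℝ × ℝ, f (-x.1, x.2) = f x) :
    betaT f = f := by
  funext x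
  ext <;> simp [betaT, h x]

def qftKernel (ω x : ℝ × ℝ) : Hq := qexp qi (-(ω.1 * x.1)) * qexp qj (-(ω.2 * x.2))

lemma Fr_eq_integral_mul_qftKernel (g : ℝ × ℝ → Hq) (ω : ℝ × ℝ) :
    Fr g ω = (1 / (2 * π)) • ∫ x, g x * qftKernel ω x := by
  simp only [Fr, qftKernel, mul_assoc]

lemma qexp_mul_mul_qexp (q : Hq) (ω x : ℝ × ℝ) :
    qexp qi (-(ω.1 * x.1)) * q * qexp qj (-(ω.2 * x.2)) =
      projCi q * qftKernel ω x + projJK q * qftKernel ω (reflectFst x) := by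
  rw [qexp_qi_mul, neg_neg, add_mul]
  simp only [qftKernel, reflectFst_apply, mul_neg, neg_neg, mul_assoc]

lemma continuous_qftKernel (ω : ℝ × ℝ) : Continuous (qftKernel ω) :=
  ((continuous_qexp qi).comp (by fun_prop)).mul ((continuous_qexp qj).comp (by fun_prop))

lemma norm_qftKernel_le (ω x : ℝ × ℝ) : ‖qftKernel ω x‖ ≤ (1 + ‖qi‖) * (1 + ‖qj‖) :=
  (norm_mul_le _ _).trans
    (mul_le_mul (norm_qexp_le _ _) (norm_qexp_le _ _) (norm_nonneg _) (by positivity))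

lemma MeasureTheory.Integrable.mul_qftKernel_comp {g : ℝ × ℝ → Hq} (hg : Integrable g)
    (ω : ℝ × ℝ) {φ : ℝ × ℝ → ℝ × ℝ} (hφ : Measurable φ) :
    Integrable (fun x => g x * qftKernel ω (φ x)) :=
  hg.mul_bdd ((continuous_qftKernel ω).comp_aestronglyMeasurable hφ.aestronglyMeasurable)
    (ae_of_all _ fun x => norm_qftKernel_le ω (φ x))

lemma integral_mul_qftKernel_reflectFst (g : ℝ × ℝ → Hq) (ω : ℝ × ℝ) :
    ∫ x, g x * qftKernel ω (reflectFst x) = ∫ x, g (reflectFst x) * qftKernel ω x := by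
  rw [← measurePreserving_reflectFst.integral_comp' (fun x => g (reflectFst x) * qftKernel ω x)]
  simp

theorem Fs_eq_Fr_betaT {f : ℝ × ℝ → Hq} (hf : Integrable f) (ω : ℝ × ℝ) :
    Fs f ω = Fr (betaT f) ω := by
  have hP : Integrable (fun x => projCi (f x)) := by
    exact (hf.sub ((hf.const_mul qi).mul_const qi)).smul (2 : ℝ)⁻¹
  have hQ : Integrable (fun x => projJK (f x)) := by
    exact (hf.add ((hf.const_mul qi).mul_const qi)).smul (2 : ℝ)⁻¹
  have hQR : Integrable (fun x => projJK (f (reflectFst x))) :=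
    (measurePreserving_reflectFst.integrable_comp_emb reflectFst.measurableEmbedding).2 hQ
  rw [Fs, Fr_eq_integral_mul_qftKernel]
  congr 1
  calc ∫ x, qexp qi (-(ω.1 * x.1)) * f x * qexp qj (-(ω.2 * x.2))
      = ∫ x, projCi (f x) * qftKernel ω x + projJK (f x) * qftKernel ω (reflectFst x) := by
        simp only [qexp_mul_mul_qexp]
    _ = (∫ x, projCi (f x) * qftKernel ω x) + ∫ x, projJK (f x) * qftKernel ω (reflectFst x) :=
        integral_add (hP.mul_qftKernel_comp ω measurable_id)
          (hQ.mul_qftKernel_comp ω reflectFst.measurable)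
    _ = (∫ x, projCi (f x) * qftKernel ω x) + ∫ x, projJK (f (reflectFst x)) * qftKernel ω x := by
        rw [integral_mul_qftKernel_reflectFst]
    _ = ∫ x, projCi (f x) * qftKernel ω x + projJK (f (reflectFst x)) * qftKernel ω x :=
        (integral_add (hP.mul_qftKernel_comp ω measurable_id)
          (hQR.mul_qftKernel_comp ω measurable_id)).symm
    _ = ∫ x, betaT f x * qftKernel ω x := by simp only [betaT_apply, add_mul]

theorem stmt9 (f : ℝ × ℝ → Hq) (hf : Integrable f) :
    (∀ ω : ℝ × ℝ, Fs f ω = Fr (betaT f) ω) ∧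
      (((∀ x : ℝ × ℝ, (f x).imJ = 0 ∧ (f x).imK = 0) ∨
          (∀ x : ℝ × ℝ, f (-x.1, x.2) = f x)) →
        ∀ ω : ℝ × ℝ, Fs f ω = Fr f ω) := by
  refine ⟨Fs_eq_Fr_betaT hf, fun h ω => ?_⟩
  have hβ : betaT f = f := h.elim betaT_eq_self_of_imJ_imK_eq_zero betaT_eq_self_of_even
  rw [Fs_eq_Fr_betaT hf, hβ]
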